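/- arXiv:1905.11151 — 3 statements merged into one kernel-verified Lean document; each statement's English description precedes it below -/
import Mathlib

section
/- Let G be a finite undirected graph with self-loops on vertex set V (so every vertex is adjacent to itself), with independence number α, and let k : V → ℝ≥0 be nonnegative weights such that for every vertex v the sum of k(v') over neighbors v' of v is positive. Then the sum over v ∈ V of k(v) / (sum of k(v') over v' adjacent to v) is at most α. -/
theorem aux_sum_ratio {V : Type*} [Fintype V] (R : V → V → Prop) [DecidableRel R]
    (hsym : Symmetric R) (hrefl : Reflexive R)
    (k : V → ℝ) (hk : ∀ v, 0 ≤ k v) :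
    ∀ (α : ℕ) (A : Finset V),
    (∀ u ∈ A, 0 < ∑ w ∈ A.filter (fun w => R w u), k w) →
    (∀ S : Finset V, S ⊆ A → (∀ v ∈ S, ∀ w ∈ S, v ≠ w → ¬ R v w) → S.card ≤ α) →
    ∑ u ∈ A, k u / (∑ w ∈ A.filter (fun w => R w u), k w) ≤ (α : ℝ) := by
  classical
  intro α
  induction α with
  | zero =>
    intro A hpos hind
    have hAe : A = ∅ := by
      by_contra h
      obtain ⟨v, hv⟩ := Finset.nonempty_iff_ne_empty.2 h
      have := hind {v} (by simpa using hv) (by simp)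
      simp at this
    simp [hAe]
  | succ α ih =>
    intro A hpos hind
    rcases A.eq_empty_or_nonempty with rfl | hA
    · simp
      positivity
    · obtain ⟨v, hv, hvmin⟩ := A.exists_min_image
        (fun u => ∑ w ∈ A.filter (fun w => R w u), k w) hA
      set S : V → ℝ := fun u => ∑ w ∈ A.filter (fun w => R w u), k w with hS
      have hSv : 0 < S v := hpos v hv
      have hsplit : ∑ u ∈ A, k u / S u
          = ∑ u ∈ A.filter (fun u => R u v), k u / S u
            + ∑ u ∈ A.filter (fun u => ¬ R u v), k u / S u :=
        (Finset.sum_filter_add_sum_filter_not A (fun u => R u v) _).symm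
      -- part 1 : neighborhood of v contributes at most 1
      have part1 : ∑ u ∈ A.filter (fun u => R u v), k u / S u ≤ 1 := by
        have h1 : ∑ u ∈ A.filter (fun u => R u v), k u / S u
            ≤ ∑ u ∈ A.filter (fun u => R u v), k u / S v := by
          apply Finset.sum_le_sum
          intro u hu
          have huA : u ∈ A := (Finset.mem_filter.1 hu).1
          gcongr
          · exact hk u
          · exact hvmin u huA
        have h2 : ∑ u ∈ A.filter (fun u => R u v), k u / S v = 1 := by
          rw [← Finset.sum_div]
          exact div_self (ne_of_gt hSv)
        linarith
      -- part 2 : remaining vertices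
      set A' : Finset V := A.filter (fun u => ¬ R u v) with hA'
      set S' : V → ℝ := fun u => ∑ w ∈ A'.filter (fun w => R w u), k w with hS'
      set A'' : Finset V := A'.filter (fun u => 0 < S' u) with hA''
      have hzero : ∀ u ∈ A', u ∉ A'' → k u = 0 := by
        intro u hu hnu
        have hle : S' u ≤ 0 := by
          by_contra h
          exact hnu (Finset.mem_filter.2 ⟨hu, lt_of_not_ge h⟩)
        have hnn : 0 ≤ S' u :=
          Finset.sum_nonneg fun w _ => hk w
        have heq : S' u = 0 := le_antisymm hle hnn
        have hmem : u ∈ A'.filter (fun w => R w u) :=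
          Finset.mem_filter.2 ⟨hu, hrefl u⟩
        have := (Finset.sum_eq_zero_iff_of_nonneg (fun w _ => hk w)).1 heq u hmem
        exact this
      have hsub' : A'' ⊆ A' := Finset.filter_subset _ _
      have hsubA : A' ⊆ A := Finset.filter_subset _ _
      -- sums over A'' equal sums over A' for the neighborhood sums
      have hSeq : ∀ u, (∑ w ∈ A''.filter (fun w => R w u), k w) = S' u := by
        intro u
        apply Finset.sum_subset
        · exact Finset.filter_subset_filter _ hsub'
        · intro w hw hnw
          have hw1 := Finset.mem_filter.1 hw
          apply hzero w hw1.1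
          intro hwA''
          exact hnw (Finset.mem_filter.2 ⟨hwA'', hw1.2⟩)
      have part2 : ∑ u ∈ A', k u / S u ≤ (α : ℝ) := by
        have e1 : ∑ u ∈ A', k u / S u = ∑ u ∈ A'', k u / S u := by
          symm
          apply Finset.sum_subset hsub'
          intro u hu hnu
          rw [hzero u hu hnu, zero_div]
        have e2 : ∑ u ∈ A'', k u / S u ≤ ∑ u ∈ A'', k u / S' u := by
          apply Finset.sum_le_sum
          intro u hu
          have hupos : 0 < S' u := (Finset.mem_filter.1 hu).2
          have hle : S' u ≤ S u := by
            apply Finset.sum_le_sum_of_subset_of_nonneg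
            · exact Finset.filter_subset_filter _ hsubA
            · intro w _ _; exact hk w
          gcongr
          exact hk u
        have e3 : ∑ u ∈ A'', k u / S' u ≤ (α : ℝ) := by
          have := ih A'' ?_ ?_
          · calc ∑ u ∈ A'', k u / S' u
                = ∑ u ∈ A'', k u / (∑ w ∈ A''.filter (fun w => R w u), k w) := by
                  apply Finset.sum_congr rfl
                  intro u _
                  rw [hSeq u]
              _ ≤ (α : ℝ) := this
          · intro u hu
            rw [hSeq u]
            exact (Finset.mem_filter.1 hu).2
          · intro T hT hTind
            have hvT : v ∉ T := by
              intro hvT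
              have := Finset.mem_filter.1 (hsub' (hT hvT))
              exact this.2 (hrefl v)
            have key : ∀ a ∈ T, ¬ R a v := by
              intro a ha
              exact (Finset.mem_filter.1 (hsub' (hT ha))).2
            have hins : (∀ x ∈ insert v T, ∀ y ∈ insert v T, x ≠ y → ¬ R x y) := by
              intro x hx y hy hxy
              rcases Finset.mem_insert.1 hx with hxv | hxT
              · rcases Finset.mem_insert.1 hy with hyv | hyT
                · exact absurd (hxv.trans hyv.symm) hxy
                · rw [hxv]
                  intro hR
                  exact key y hyT (hsym hR)
              · rcases Finset.mem_insert.1 hy with hyv | hyT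
                · rw [hyv]
                  exact key x hxT
                · exact hTind x hxT y hyT hxy
            have hsubIns : insert v T ⊆ A := by
              intro x hx
              rcases Finset.mem_insert.1 hx with hxv | hxT
              · exact hxv ▸ hv
              · exact hsubA (hsub' (hT hxT))
            have := hind (insert v T) hsubIns hins
            rw [Finset.card_insert_of_notMem hvT] at this
            omega
        linarith
      rw [hsplit]
      push_cast
      linarith

/-- Lemma 3 of Mannor–Shamir 2011: for a finite undirected graph with
self-loops (a reflexive symmetric adjacency relation `R`) with independence
number (at most) `α`, and nonnegative weights `k` whose neighborhood sums are
positive, the sum of `k v` over the neighborhood sum of `v` is at most `α`. -/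
theorem sum_ratio_le_independence_number
    {V : Type*} [Fintype V] (R : V → V → Prop) [DecidableRel R]
    (hsym : Symmetric R) (hrefl : Reflexive R)
    (k : V → ℝ) (hk : ∀ v, 0 ≤ k v)
    (hpos : ∀ v : V, 0 < ∑ v' ∈ Finset.univ.filter (fun v' => R v' v), k v')
    (α : ℕ)
    (hα : ∀ S : Finset V, (∀ v ∈ S, ∀ w ∈ S, v ≠ w → ¬ R v w) → S.card ≤ α) :
    ∑ v : V, k v / (∑ v' ∈ Finset.univ.filter (fun v' => R v' v), k v') ≤ (α : ℝ) := by
  exact aux_sum_ratio R hsym hrefl k hk α Finset.univ (fun u _ => hpos u)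
    (fun T _ hT => hα T hT)
end

section
/- Let G be a finite directed graph with independence number α (computed after ignoring edge directions) and let I_v denote the in-degree of vertex v. Then ∑_{v ∈ V} 1/(1 + I_v) ≤ 2α · ln(1 + |V|/α). -/
/-!
By the Caro–Wei inequality and Cauchy–Schwarz, every vertex set `T` of the undirected graph
underlying `A` has average degree at least `|T|/α - 1`. Each undirected edge comes from a directed
one, so some `v ∈ T` has in-degree at least `(|T|/α - 1)/2`, that is `1/(1 + I_v) ≤ 2α/(α + |T|)`.
Removing such vertices one at a time bounds the sum by
`2α ∑_{k=1}^{|V|} 1/(α + k) ≤ 2α ln(1 + |V|/α)`.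
-/

open Finset

theorem Finset.sum_le_sum_range_of_forall_exists_le {ι M : Type*} [AddCommMonoid M]
    [PartialOrder M] [IsOrderedAddMonoid M] (f : ι → M) (g : ℕ → M)
    (h : ∀ T : Finset ι, T.Nonempty → ∃ v ∈ T, f v ≤ g #T) (T : Finset ι) :
    ∑ v ∈ T, f v ≤ ∑ k ∈ range #T, g (k + 1) := by
  classical
  induction hn : #T generalizing T with
  | zero => simp_all
  | succ n ih =>
    obtain ⟨v, hv, hfv⟩ := h T (card_pos.1 (by omega))
    rw [← sum_erase_add T f hv, sum_range_succ, ← hn]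
    exact add_le_add (ih _ (by rw [card_erase_of_mem hv, hn]; rfl)) hfv

namespace Real

theorem one_div_add_one_le_log_sub_log {x : ℝ} (hx : 0 < x) :
    1 / (x + 1) ≤ log (x + 1) - log x := by
  have h := one_sub_inv_le_log_of_pos (div_pos (by linarith : 0 < x + 1) hx)
  rwa [log_div (by linarith) hx.ne', inv_div, one_sub_div (by linarith), add_sub_cancel_left] at h

theorem sum_range_one_div_add_le_log {a : ℝ} (ha : 0 < a) (n : ℕ) :
    ∑ k ∈ range n, 1 / (a + k + 1) ≤ log (1 + n / a) := by
  calc ∑ k ∈ range n, 1 / (a + k + 1)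
      ≤ ∑ k ∈ range n, (log (a + (k + 1 : ℕ)) - log (a + k)) := by
        refine sum_le_sum fun k _ => ?_
        push_cast
        rw [← add_assoc]
        exact one_div_add_one_le_log_sub_log (by positivity)
    _ = log (1 + n / a) := by
        rw [sum_range_sub (fun k : ℕ => log (a + k)),
          ← log_div (by positivity) (by simpa using ha.ne')]
        congr 1
        field_simp
        simp

end Real

namespace SimpleGraph

variable {V : Type*} (G : SimpleGraph V) [DecidableRel G.Adj]

theorem card_filter_eq_or_adj [DecidableEq V] {T : Finset V} {v : V} (hv : v ∈ T) :
    #{u ∈ T | u = v ∨ G.Adj u v} = 1 + #{u ∈ T | G.Adj u v} := by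
  rw [filter_or, filter_eq' T v, if_pos hv, card_union_of_disjoint, card_singleton]
  simp

theorem card_le_of_isIndepSet_of_subset_filter_not_adj [DecidableEq V] {T : Finset V} {v : V}
    {β : ℕ} (hv : v ∈ T)
    (hβ : ∀ S ⊆ T, G.IsIndepSet (S : Set V) → #S ≤ β + 1) :
    ∀ S ⊆ {u ∈ T | ¬(u = v ∨ G.Adj u v)}, G.IsIndepSet (S : Set V) → #S ≤ β := by
  intro S hS hind
  have hfar : ∀ u ∈ S, u ≠ v ∧ ¬G.Adj u v := fun u hu => not_or.1 (mem_filter.1 (hS hu)).2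
  have hvS : v ∉ S := fun h => (hfar v h).1 rfl
  have hinsert : G.IsIndepSet (insert v S : Finset V) := by
    rw [coe_insert, IsIndepSet, Set.pairwise_insert]
    exact ⟨hind, fun u hu _ => ⟨fun h => (hfar u hu).2 h.symm, (hfar u hu).2⟩⟩
  have := hβ _ (insert_subset hv fun u hu => (mem_filter.1 (hS hu)).1) hinsert
  rwa [card_insert_of_notMem hvS, add_le_add_iff_right] at this

theorem sum_one_div_one_add_card_adj_le {β : ℕ} {T : Finset V}
    (hβ : ∀ S ⊆ T, G.IsIndepSet (S : Set V) → #S ≤ β) :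
    ∑ v ∈ T, (1 : ℝ) / (1 + #{u ∈ T | G.Adj u v}) ≤ β := by
  classical
  induction β generalizing T with
  | zero =>
    obtain rfl : T = ∅ := eq_empty_of_forall_notMem fun v hv => by
      simpa using hβ {v} (by simpa using hv) (by simp [IsIndepSet])
    simp
  | succ β ih =>
    rcases T.eq_empty_or_nonempty with rfl | hne
    · simp only [sum_empty]
      positivity
    -- Delete a vertex of minimum degree together with its neighbours: these contribute at most 1.
    obtain ⟨v, hv, hmin⟩ := T.exists_min_image (fun v => #{u ∈ T | G.Adj u v}) hne
    rw [← sum_filter_add_sum_filter_not T (fun u => u = v ∨ G.Adj u v)]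
    have hnbhd : ∑ u ∈ T with u = v ∨ G.Adj u v, (1 : ℝ) / (1 + #{w ∈ T | G.Adj w u}) ≤ 1 :=
      calc _ ≤ #{u ∈ T | u = v ∨ G.Adj u v} • ((1 : ℝ) / (1 + #{w ∈ T | G.Adj w v})) :=
            sum_le_card_nsmul _ _ _ fun u hu => by
              have := hmin u (mem_filter.1 hu).1
              gcongr
        _ = 1 := by
          rw [nsmul_eq_mul, card_filter_eq_or_adj G hv]
          push_cast
          field_simp
    have hrest : ∑ u ∈ T with ¬(u = v ∨ G.Adj u v), (1 : ℝ) / (1 + #{w ∈ T | G.Adj w u}) ≤ β := by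
      refine (sum_le_sum fun u _ => ?_).trans
        (ih (card_le_of_isIndepSet_of_subset_filter_not_adj G hv hβ))
      gcongr
      exact filter_subset _ _
    push_cast
    linarith

theorem card_sq_le_mul_sum_one_add_card_adj {β : ℕ} {T : Finset V}
    (hβ : ∀ S ⊆ T, G.IsIndepSet (S : Set V) → #S ≤ β) :
    (#T : ℝ) ^ 2 ≤ β * ∑ v ∈ T, (1 + #{u ∈ T | G.Adj u v} : ℝ) := by
  rcases T.eq_empty_or_nonempty with rfl | hne
  · simp
  have hpos : ∀ v ∈ T, (0 : ℝ) < 1 + #{u ∈ T | G.Adj u v} := fun _ _ => by positivity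
  have h := sq_sum_div_le_sum_sq_div T (fun _ => (1 : ℝ)) hpos
  simp only [sum_const, nsmul_eq_mul, mul_one, one_pow] at h
  replace h := h.trans (sum_one_div_one_add_card_adj_le G hβ)
  exact (div_le_iff₀ (sum_pos hpos hne)).1 h

variable {r : V → V → Prop}

theorem isIndepSet_fromRel_iff {s : Set V} :
    (fromRel r).IsIndepSet s ↔ ∀ v ∈ s, ∀ w ∈ s, v ≠ w → ¬r v w ∧ ¬r w v := by
  simp [IsIndepSet, Set.Pairwise, not_or]

theorem sum_card_fromRel_adj_le [DecidableRel r] [DecidableRel (fromRel r).Adj] (T : Finset V) :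
    ∑ v ∈ T, #{u ∈ T | (fromRel r).Adj u v} ≤ 2 * ∑ v ∈ T, #{u ∈ T | r u v} :=
  calc ∑ v ∈ T, #{u ∈ T | (fromRel r).Adj u v}
      ≤ ∑ v ∈ T, (#{u ∈ T | r u v} + #{u ∈ T | r v u}) := by
        classical
        refine sum_le_sum fun v _ => (card_le_card ?_).trans (card_union_le _ _)
        intro u
        simp only [mem_filter, mem_union, fromRel_adj]
        tauto
    _ = 2 * ∑ v ∈ T, #{u ∈ T | r u v} := by
        rw [sum_add_distrib]
        have := sum_card_bipartiteAbove_eq_sum_card_bipartiteBelow (s := T) (t := T) (r := r)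
        simp only [bipartiteAbove, bipartiteBelow] at this
        omega

theorem exists_mem_card_le_mul_one_add_two_mul_indegree [DecidableRel r] {α : ℕ}
    {T : Finset V} (hT : T.Nonempty)
    (hα : ∀ S ⊆ T, (fromRel r).IsIndepSet (S : Set V) → #S ≤ α) :
    ∃ v ∈ T, (#T : ℝ) ≤ α * (1 + 2 * #{u ∈ T | r u v}) := by
  classical
  refine exists_le_of_sum_le hT ?_
  have hdeg : (∑ v ∈ T, #{u ∈ T | (fromRel r).Adj u v} : ℝ) ≤ 2 * ∑ v ∈ T, #{u ∈ T | r u v} := by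
    exact_mod_cast sum_card_fromRel_adj_le T
  push_cast at hdeg
  calc ∑ _ ∈ T, (#T : ℝ) = #T ^ 2 := by rw [sum_const, nsmul_eq_mul, sq]
    _ ≤ α * ∑ v ∈ T, (1 + #{u ∈ T | (fromRel r).Adj u v} : ℝ) :=
        card_sq_le_mul_sum_one_add_card_adj _ hα
    _ ≤ α * ∑ v ∈ T, (1 + 2 * #{u ∈ T | r u v} : ℝ) := by
        gcongr ?_ * ?_
        simp only [sum_add_distrib, ← mul_sum]
        linarith
    _ = ∑ v ∈ T, α * (1 + 2 * #{u ∈ T | r u v} : ℝ) := mul_sum _ _ _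

theorem exists_mem_one_div_one_add_indegree_le [Fintype V] [DecidableRel r] {α : ℕ}
    (hα : ∀ S : Finset V, (fromRel r).IsIndepSet (S : Set V) → #S ≤ α)
    {T : Finset V} (hT : T.Nonempty) :
    ∃ v ∈ T, (1 : ℝ) / (1 + #{u | r u v}) ≤ 2 * α / (α + #T) := by
  obtain ⟨v, hv, hle⟩ := exists_mem_card_le_mul_one_add_two_mul_indegree hT fun S _ => hα S
  refine ⟨v, hv, ?_⟩
  have hsub : (#{u ∈ T | r u v} : ℝ) ≤ #{u | r u v} := by
    exact_mod_cast card_le_card (filter_subset_filter _ (subset_univ T))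
  have hTpos : (0 : ℝ) < #T := by exact_mod_cast hT.card_pos
  rw [div_le_div_iff₀ (by positivity) (by positivity)]
  nlinarith [(Nat.cast_nonneg α : (0 : ℝ) ≤ α)]

end SimpleGraph

open SimpleGraph in
theorem sum_inv_one_add_indegree_le_general
    {V : Type*} [Fintype V] (A : V → V → Prop) [DecidableRel A] (α : ℕ)
    (hub : ∀ S : Finset V,
      (∀ v ∈ S, ∀ w ∈ S, v ≠ w → ¬ A v w ∧ ¬ A w v) → S.card ≤ α) :
    ∑ v : V, (1 : ℝ) / (1 + (Finset.univ.filter (fun u => A u v)).card)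
      ≤ 2 * α * Real.log (1 + (Fintype.card V : ℝ) / α) := by
  have hα : ∀ S : Finset V, (fromRel A).IsIndepSet (S : Set V) → #S ≤ α := fun S hS =>
    hub S (isIndepSet_fromRel_iff.1 hS)
  calc ∑ v : V, (1 : ℝ) / (1 + #{u | A u v})
      ≤ ∑ k ∈ range (Fintype.card V), 2 * (α : ℝ) / (α + (k + 1 : ℕ)) := by
        rw [← card_univ]
        exact sum_le_sum_range_of_forall_exists_le (fun v => (1 : ℝ) / (1 + #{u | A u v}))
          (fun k => 2 * (α : ℝ) / (α + k))
          (fun _ hT => exists_mem_one_div_one_add_indegree_le hα hT) univ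
    _ = 2 * α * ∑ k ∈ range (Fintype.card V), 1 / ((α : ℝ) + k + 1) := by
        rw [mul_sum]
        push_cast
        simp only [mul_one_div, add_assoc]
    _ ≤ 2 * α * Real.log (1 + (Fintype.card V : ℝ) / α) := by
        rcases α.eq_zero_or_pos with rfl | hαpos
        · simp
        gcongr
        exact Real.sum_range_one_div_add_le_log (by positivity) _

/-- Lemma 10 of Alon et al. 2013: for a finite directed graph with
independence number `α` (computed in the underlying undirected graph),
`∑_v 1/(1 + I_v) ≤ 2 α ln(1 + |V|/α)`, where `I_v` is the in-degree of `v`. -/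
theorem sum_inv_one_add_indegree_le
    {V : Type*} [Fintype V] (A : V → V → Prop) [DecidableRel A] (α : ℕ)
    (hmax : ∃ S : Finset V,
      (∀ v ∈ S, ∀ w ∈ S, v ≠ w → ¬ A v w ∧ ¬ A w v) ∧ S.card = α)
    (hub : ∀ S : Finset V,
      (∀ v ∈ S, ∀ w ∈ S, v ≠ w → ¬ A v w ∧ ¬ A w v) → S.card ≤ α) :
    ∑ v : V, (1 : ℝ) / (1 + (Finset.univ.filter (fun u => A u v)).card)
      ≤ 2 * α * Real.log (1 + (Fintype.card V : ℝ) / α) :=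
  sum_inv_one_add_indegree_le_general A α hub
end

section
/- With the setup of the Exp3-OE estimator, ∑_{p ∈ P} x_t(p)·E_t[\hat{L}_t(p)] ≥ ∑_{p ∈ P} x_t(p)·L_t(p) − β·Q_t, where \hat{L}_t(p) = ∑_{e∈p} \hat{ℓ}_t(e), L_t(p) = ∑_{e∈p} ℓ_t(e), r_t(e) = ∑_{p ∋ e} x_t(p), and Q_t = ∑_{e} r_t(e)/(q_t(e)+β). -/
lemma exp3OE_swap {E : Type*} [Fintype E] [DecidableEq E]
    (P : Finset (Finset E)) (x : Finset E → ℝ) (f : E → ℝ) :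
    ∑ p ∈ P, x p * ∑ e ∈ p, f e
      = ∑ e : E, (∑ p ∈ P.filter (fun p => e ∈ p), x p) * f e := by
  have h : ∀ p : Finset E, x p * ∑ e ∈ p, f e = ∑ e : E, if e ∈ p then x p * f e else 0 := by
    intro p
    rw [Finset.mul_sum, Finset.sum_ite_mem, Finset.univ_inter]
  simp_rw [h, Finset.sum_comm (s := P)]
  congr 1; ext e
  rw [Finset.sum_mul, Finset.sum_filter]

/-- Lower bound on the expected estimated loss in Exp3-OE:
`∑_p x(p) E_t[L̂_t(p)] ≥ ∑_p x(p) L_t(p) − β Q_t`, where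
`E_t[ℓ̂_t(e)] = q_t(e) ℓ_t(e)/(q_t(e)+β)`, `r_t(e) = ∑_{p ∋ e} x(p)` and
`Q_t = ∑_e r_t(e)/(q_t(e)+β)`. -/
theorem exp3OE_expected_estimated_loss_lower_bound
    {E : Type*} [Fintype E] [DecidableEq E]
    (P : Finset (Finset E))
    (x : Finset E → ℝ) (hx0 : ∀ p ∈ P, 0 ≤ x p) (hx1 : ∑ p ∈ P, x p = 1)
    (ℓ : E → ℝ) (hℓ0 : ∀ e, 0 ≤ ℓ e) (hℓ1 : ∀ e, ℓ e ≤ 1)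
    (β : ℝ) (hβ : 0 < β)
    (O : E → Finset (Finset E)) (hOP : ∀ e, O e ⊆ P)
    (hO : ∀ e, ∀ p ∈ P, e ∈ p → p ∈ O e) :
    ∑ p ∈ P, x p * (∑ e ∈ p, (∑ q ∈ O e, x q) * ℓ e / ((∑ q ∈ O e, x q) + β))
      ≥ ∑ p ∈ P, x p * (∑ e ∈ p, ℓ e)
        - β * ∑ e : E, (∑ p ∈ P.filter (fun p => e ∈ p), x p) /
            ((∑ q ∈ O e, x q) + β) := by
  rw [exp3OE_swap P x (fun e => (∑ q ∈ O e, x q) * ℓ e / ((∑ q ∈ O e, x q) + β)),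
    exp3OE_swap P x ℓ, Finset.mul_sum, ← Finset.sum_sub_distrib, ge_iff_le]
  apply Finset.sum_le_sum
  intro e _
  set r : ℝ := ∑ p ∈ P.filter (fun p => e ∈ p), x p with hr
  set q : ℝ := ∑ q ∈ O e, x q with hq
  have hr0 : 0 ≤ r := Finset.sum_nonneg fun p hp => hx0 p (Finset.mem_filter.mp hp).1
  have hq0 : 0 ≤ q := Finset.sum_nonneg fun p hp => hx0 p (hOP e hp)
  have hqβ : 0 < q + β := by linarith
  have hne : (q + β) ≠ 0 := ne_of_gt hqβ
  have key : q * ℓ e * (q + β)⁻¹ - (ℓ e - (q + β)⁻¹ * β) = β * (1 - ℓ e) * (q + β)⁻¹ := by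
    field_simp
    ring
  have h1 : 0 ≤ β * (1 - ℓ e) * (q + β)⁻¹ := by
    apply mul_nonneg (mul_nonneg hβ.le (by linarith [hℓ1 e])) (inv_nonneg.mpr hqβ.le)
  have hinv : 0 < (q + β)⁻¹ := inv_pos.mpr hqβ
  have hmul : (q + β) * (q + β)⁻¹ = 1 := mul_inv_cancel₀ hne
  rw [div_eq_mul_inv, div_eq_mul_inv]
  nlinarith [mul_nonneg hr0 h1, hmul, hr0, hinv.le,
    mul_nonneg hr0 (mul_nonneg (hℓ0 e) hinv.le)]
end
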